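/- For every sequence 𝐢 = ⟨i₁,…,i_ℓ⟩ ∈ Seq₂(m,n) (with ℓ = m+n) and every μ ∈ F, one has ∏_{j=1}^{ℓ} q_{i_j}(μ+σ_j+α_{i_j}/2) = ∏_{λ∈F} (μ−λ)^{ord(𝐢,λ)}, where the product on the right has only finitely many factors different from 1 since ord(𝐢,·) is nonzero at only finitely many λ ∈ F. -/

import Mathlib

open Complex

noncomputable section
open scoped Classical

/-- The face lattice `F = ℤα + ℤβ ⊆ ℝ`. -/
def latF (α β : ℝ) : Set ℝ := {u | ∃ x y : ℤ, u = x * α + y * β}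

/-- The vertex lattice `V = F + (α+β)/2`. -/
def latV (α β : ℝ) : Set ℝ := {u | ∃ x y : ℤ, u = x * α + y * β + (α + β) / 2}

/-- The vertical edge lattice `E₁ = F + α/2`. -/
def latE1 (α β : ℝ) : Set ℝ := {u | ∃ x y : ℤ, u = x * α + y * β + α / 2}

/-- The horizontal edge lattice `E₂ = F + β/2`. -/
def latE2 (α β : ℝ) : Set ℝ := {u | ∃ x y : ℤ, u = x * α + y * β + β / 2}

/-- An `(m,n)`-periodic higher spin vertex configuration: a pair of finitely supported
multiplicity functions, supported on `E₁` resp. `E₂`, satisfying the current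
conservation rule. -/
structure Config (α β : ℝ) (ℒ₁ ℒ₂ : ℝ → ℕ) : Prop where
  supp1 : ∀ u : ℝ, ℒ₁ u ≠ 0 → u ∈ latE1 α β
  supp2 : ∀ u : ℝ, ℒ₂ u ≠ 0 → u ∈ latE2 α β
  fin1 : (Function.support ℒ₁).Finite
  fin2 : (Function.support ℒ₂).Finite
  conserv : ∀ v ∈ latV α β,
    ℒ₁ (v + β / 2) + ℒ₂ (v + α / 2) = ℒ₁ (v - β / 2) + ℒ₂ (v - α / 2)

/-- `Pᵢ(u) = ∏_{e} (u-e)^{ℒᵢ(e)}` as a function on `ℂ` (a finite product). -/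
def PfunC (ℒ : ℝ → ℕ) (u : ℂ) : ℂ := ∏ᶠ e : ℝ, (u - (e : ℂ)) ^ ℒ e

/-- `Pᵢ(u) = ∏_{e} (u-e)^{ℒᵢ(e)}` as a real-valued function on `ℝ`. -/
def PfunR (ℒ : ℝ → ℕ) (u : ℝ) : ℝ := ∏ᶠ e : ℝ, (u - e) ^ ℒ e

/-- `lᵢ(u) = Σ_{e > u} ℒᵢ(e)`. -/
def lfun (ℒ : ℝ → ℕ) (u : ℝ) : ℕ := ∑ᶠ e : ℝ, if u < e then ℒ e else 0

/-- The square root `qᵢ(e) = 𝐢^{lᵢ(e)}·|Pᵢ(e)|^{1/2}`. -/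
def qfun (ℒ : ℝ → ℕ) (e : ℝ) : ℂ := Complex.I ^ lfun ℒ e * (Real.sqrt |PfunR ℒ e| : ℂ)

/-- The step `α₁ = α` (for `i = 0`, i.e. a `1`-step) or `α₂ = β` (for `i = 1`). -/
def stepOf (α β : ℝ) (i : Fin 2) : ℝ := if i = 0 then α else β

/-- `σ_j = α_{i₁} + ⋯ + α_{i_{j-1}}`, the partial sum of the first `j` steps. -/
def sigmaL (α β : ℝ) (l : List (Fin 2)) (j : ℕ) : ℝ :=
  ((l.take j).map (stepOf α β)).sum

/-- `ord(𝐢,λ) = Σ_{j : i_j = 1} 𝓛₁(λ + σ_j + α/2)`. -/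
def ordL (α β : ℝ) (ℒ₁ : ℝ → ℕ) (l : List (Fin 2)) (lam : ℝ) : ℕ :=
  ∑ j ∈ Finset.range l.length,
    if l.getD j 0 = 0 then ℒ₁ (lam + sigmaL α β l j + α / 2) else 0

/-!
Each factor `q_{i_j}(μ + σ_j + α_{i_j}/2)` is `q` of a translated edge multiplicity evaluated at
`μ`, and `q` is multiplicative in the multiplicity (phases add, moduli multiply). So the left side
is `q_N(μ)` with `N = ord(𝐢,·) + ord₂(𝐢,·)`, where `ord₂` counts the `𝓛₂`-edges crossed by the
`2`-steps. Current conservation yields a height function on faces that rises by `𝓛₁` across a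
`1`-edge and drops by `𝓛₂` across a `2`-edge: a tail sum of `𝓛₁` along the ray in direction `α`
(or of `𝓛₂` along `β` when `α = 0`). The walk closes up because `mα + nβ = 0`, hence
`ord = ord₂` and the left side is `q_{ord}(μ)² = P_{ord}(μ)`, the sign of `P` being `𝐢^{2l}`.
-/

open Function

theorem finsum_nat_eq_add_finsum_succ {M : Type*} [AddCommMonoid M] {f : ℕ → M}
    (hf : f.HasFiniteSupport) : ∑ᶠ n, f n = f 0 + ∑ᶠ n, f (n + 1) := by
  rw [← add_finsum_cond_ne 0 hf, ← finsum_mem_range Nat.succ_injective, Nat.range_succ]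
  congr 1
  exact finsum_congr fun n => finsum_congr_Prop (by simp [Nat.pos_iff_ne_zero]) fun _ => rfl

theorem potential_along_walk {ι G A : Type*} [AddMonoid G] [AddCommMonoid A]
    (step : ι → G) (w : ι → G → A) (Φ : G → A) (hΦ : ∀ i p, Φ (p + step i) = Φ p + w i p)
    (d : ι) (l : List ι) (p : G) :
    Φ (p + (l.map step).sum) =
      Φ p + ∑ j ∈ Finset.range l.length, w (l.getD j d) (p + ((l.take j).map step).sum) := by
  induction l generalizing p with
  | nil => simp
  | cons i l ih =>
    rw [List.length_cons, Finset.sum_range_succ', List.map_cons, List.sum_cons, ← add_assoc,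
      ih, hΦ]
    simp [add_assoc, add_comm, add_left_comm]

def tailSum (a : ℝ) (L : ℝ → ℕ) (x : ℝ) : ℕ := ∑ᶠ r : ℕ, L (x + r * a)

section TailSum

variable {a : ℝ} {L L' : ℝ → ℕ}

theorem hasFiniteSupport_tail (ha : a ≠ 0) (hL : L.HasFiniteSupport) (x : ℝ) :
    (fun r : ℕ => L (x + r * a)).HasFiniteSupport :=
  hL.fun_comp_of_injective
    ((add_right_injective x).comp ((mul_left_injective₀ ha).comp Nat.cast_injective))

theorem tailSum_eq_add (ha : a ≠ 0) (hL : L.HasFiniteSupport) (x : ℝ) :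
    tailSum a L x = L x + tailSum a L (x + a) := by
  rw [tailSum, finsum_nat_eq_add_finsum_succ (hasFiniteSupport_tail ha hL x)]
  simp only [tailSum, Nat.cast_zero, zero_mul, add_zero, Nat.cast_succ]
  congr 2
  ext r
  ring_nf

theorem tailSum_add_of_conserv (ha : a ≠ 0) (hL : L.HasFiniteSupport)
    (hL' : L'.HasFiniteSupport) {b : ℝ} (h : ∀ x, L (x + b) + L' (x + a) = L x + L' x) (x : ℝ) :
    tailSum a L (x + b) = L' x + tailSum a L x := by
  have hstep (r : ℕ) :
      L (x + b + r * a) + L' (x + (r + 1 : ℕ) * a) = L (x + r * a) + L' (x + r * a) := by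
    convert h (x + r * a) using 3 <;> push_cast <;> ring
  have hsum := finsum_congr hstep
  have hL'succ : (fun r : ℕ => L' (x + (r + 1 : ℕ) * a)).HasFiniteSupport :=
    (hasFiniteSupport_tail ha hL' x).comp_of_injective (g := Nat.succ) Nat.succ_injective
  rw [finsum_add_distrib (hasFiniteSupport_tail ha hL _) hL'succ,
    finsum_add_distrib (hasFiniteSupport_tail ha hL x) (hasFiniteSupport_tail ha hL' x),
    finsum_nat_eq_add_finsum_succ (hasFiniteSupport_tail ha hL' x)] at hsum
  simp only [tailSum, Nat.cast_zero, zero_mul, add_zero] at hsum ⊢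
  omega

end TailSum

namespace Config

variable {α β : ℝ} {ℒ₁ ℒ₂ : ℝ → ℕ}

theorem conserv_all (hconf : Config α β ℒ₁ ℒ₂) (v : ℝ) :
    ℒ₁ (v + β / 2) + ℒ₂ (v + α / 2) = ℒ₁ (v - β / 2) + ℒ₂ (v - α / 2) := by
  by_cases hv : v ∈ latV α β
  · exact hconf.conserv v hv
  have h₁ (s : ℝ) (hs : s = β / 2 ∨ s = -(β / 2)) : ℒ₁ (v + s) = 0 := by
    by_contra h
    obtain ⟨x, y, hxy⟩ := hconf.supp1 _ h
    rcases hs with rfl | rfl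
    exacts [hv ⟨x, y - 1, by push_cast; linarith⟩, hv ⟨x, y, by linarith⟩]
  have h₂ (s : ℝ) (hs : s = α / 2 ∨ s = -(α / 2)) : ℒ₂ (v + s) = 0 := by
    by_contra h
    obtain ⟨x, y, hxy⟩ := hconf.supp2 _ h
    rcases hs with rfl | rfl
    exacts [hv ⟨x - 1, y, by push_cast; linarith⟩, hv ⟨x, y, by linarith⟩]
  simp only [sub_eq_add_neg, h₁ _ (.inl rfl), h₁ _ (.inr rfl), h₂ _ (.inl rfl), h₂ _ (.inr rfl)]

theorem conserv_face (hconf : Config α β ℒ₁ ℒ₂) (p : ℝ) :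
    ℒ₁ (p + β + α / 2) + ℒ₂ (p + α + β / 2) = ℒ₁ (p + α / 2) + ℒ₂ (p + β / 2) := by
  convert hconf.conserv_all (p + (α + β) / 2) using 3 <;> ring

theorem exists_height (hconf : Config α β ℒ₁ ℒ₂) (hαβ : (α, β) ≠ ((0 : ℝ), (0 : ℝ))) :
    ∃ Φ : ℝ → ℤ, (∀ p, Φ (p + α) = Φ p + ℒ₁ (p + α / 2)) ∧
      ∀ p, Φ (p + β) = Φ p - ℒ₂ (p + β / 2) := by
  have h₁ : (fun p => ℒ₁ (p + α / 2)).HasFiniteSupport :=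
    HasFiniteSupport.fun_comp_of_injective (add_left_injective _) hconf.fin1
  have h₂ : (fun p => ℒ₂ (p + β / 2)).HasFiniteSupport :=
    HasFiniteSupport.fun_comp_of_injective (add_left_injective _) hconf.fin2
  by_cases hα : α = 0
  · have hβ : β ≠ 0 := fun hβ => hαβ (by rw [hα, hβ])
    refine ⟨fun p => tailSum β (fun p => ℒ₂ (p + β / 2)) p, fun p => ?_, fun p => ?_⟩
    · have := tailSum_add_of_conserv hβ h₂ h₁ (fun x => by linarith [hconf.conserv_face x]) p
      simp only at this ⊢
      omega
    · have := tailSum_eq_add hβ h₂ p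
      simp only at this ⊢
      omega
  · refine ⟨fun p => -tailSum α (fun p => ℒ₁ (p + α / 2)) p, fun p => ?_, fun p => ?_⟩
    · have := tailSum_eq_add hα h₁ p
      simp only at this ⊢
      omega
    · have := tailSum_add_of_conserv hα h₁ h₂ hconf.conserv_face p
      simp only at this ⊢
      omega

end Config

theorem sum_map_stepOf (α β : ℝ) (l : List (Fin 2)) :
    (l.map (stepOf α β)).sum = l.count 0 * α + l.count 1 * β := by
  induction l with
  | nil => simp
  | cons i l ih =>
    rw [List.map_cons, List.sum_cons, ih, List.count_cons, List.count_cons]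
    fin_cases i <;> simp [stepOf] <;> ring

def ordL₂ (α β : ℝ) (ℒ₂ : ℝ → ℕ) (l : List (Fin 2)) (lam : ℝ) : ℕ :=
  ∑ j ∈ Finset.range l.length,
    if l.getD j 0 = 0 then 0 else ℒ₂ (lam + sigmaL α β l j + β / 2)

theorem ordL_eq_ordL₂ {α β : ℝ} {ℒ₁ ℒ₂ : ℝ → ℕ} (hconf : Config α β ℒ₁ ℒ₂)
    (hαβ : (α, β) ≠ ((0 : ℝ), (0 : ℝ))) {l : List (Fin 2)} (hl : (l.map (stepOf α β)).sum = 0) :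
    ordL α β ℒ₁ l = ordL₂ α β ℒ₂ l := by
  ext x
  obtain ⟨Φ, hΦα, hΦβ⟩ := hconf.exists_height hαβ
  have hwalk := potential_along_walk (stepOf α β)
    (fun i p => if i = 0 then (ℒ₁ (p + α / 2) : ℤ) else -ℒ₂ (p + β / 2)) Φ
    (fun i p => by fin_cases i <;> simp [stepOf, hΦα, hΦβ, sub_eq_add_neg]) 0 l x
  rw [hl, add_zero, left_eq_add] at hwalk
  have hdiff : (ordL α β ℒ₁ l x : ℤ) - ordL₂ α β ℒ₂ l x = 0 := by
    rw [← hwalk, ordL, ordL₂]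
    push_cast
    rw [← Finset.sum_sub_distrib]
    refine Finset.sum_congr rfl fun j _ => ?_
    split_ifs <;> simp [sigmaL, add_assoc]
  omega

section QFun

variable {L L' : ℝ → ℕ}

theorem lfun_add (hL : L.HasFiniteSupport) (hL' : L'.HasFiniteSupport) (u : ℝ) :
    lfun (L + L') u = lfun L u + lfun L' u := by
  rw [lfun, lfun, lfun, ← finsum_add_distrib]
  · exact finsum_congr fun e => ite_add_zero
  · exact hL.subset (support_subset_iff'.2 fun e he => by simp [notMem_support.1 he])
  · exact hL'.subset (support_subset_iff'.2 fun e he => by simp [notMem_support.1 he])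

theorem PfunR_add (hL : L.HasFiniteSupport) (hL' : L'.HasFiniteSupport) (u : ℝ) :
    PfunR (L + L') u = PfunR L u * PfunR L' u := by
  rw [PfunR, PfunR, PfunR, ← finprod_mul_distrib (hL.hasFiniteMulSupport_fun_pow _)
    (hL'.hasFiniteMulSupport_fun_pow _)]
  exact finprod_congr fun e => pow_add _ _ _

theorem qfun_add (hL : L.HasFiniteSupport) (hL' : L'.HasFiniteSupport) (u : ℝ) :
    qfun (L + L') u = qfun L u * qfun L' u := by
  simp only [qfun, lfun_add hL hL', PfunR_add hL hL', abs_mul,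
    Real.sqrt_mul (abs_nonneg _), pow_add, Complex.ofReal_mul]
  ring

theorem qfun_zero (u : ℝ) : qfun 0 u = 1 := by
  simp [qfun, lfun, PfunR]

theorem prod_qfun {ι : Type*} (s : Finset ι) {L : ι → ℝ → ℕ}
    (hL : ∀ i, (L i).HasFiniteSupport) (u : ℝ) :
    ∏ i ∈ s, qfun (L i) u = qfun (∑ i ∈ s, L i) u := by
  classical
  induction s using Finset.induction_on with
  | empty => simp [qfun_zero]
  | insert i s hi ih =>
    rw [Finset.prod_insert hi, Finset.sum_insert hi, ih, qfun_add (hL i)]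
    simpa only [Finset.sum_fn] using HasFiniteSupport.sum hL s

theorem qfun_add_right (L : ℝ → ℕ) (u c : ℝ) :
    qfun L (u + c) = qfun (fun x => L (x + c)) u := by
  have hl : lfun L (u + c) = lfun (fun x => L (x + c)) u := by
    rw [lfun, lfun, ← finsum_comp_equiv (Equiv.addRight c)]
    simp
  have hP : PfunR L (u + c) = PfunR (fun x => L (x + c)) u := by
    rw [PfunR, PfunR, ← finprod_comp_equiv (Equiv.addRight c)]
    simp
  rw [qfun, qfun, hl, hP]

theorem PfunR_eq_neg_one_pow_mul_abs (hL : L.HasFiniteSupport) (u : ℝ) :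
    PfunR L u = (-1) ^ lfun L u * |PfunR L u| := by
  have hS : ∀ e ∉ hL.toFinset, L e = 0 := fun e he =>
    notMem_support.1 fun h => he ((Set.Finite.mem_toFinset hL).2 h)
  rw [PfunR, lfun, finprod_eq_prod_of_mulSupport_subset _ (s := hL.toFinset)
      (mulSupport_subset_iff'.2 fun e he => by simp [hS e he]),
    finsum_eq_sum_of_support_subset _ (s := hL.toFinset)
      (support_subset_iff'.2 fun e he => by simp [hS e he]),
    Finset.abs_prod, ← Finset.prod_pow_eq_pow_sum, ← Finset.prod_mul_distrib]
  refine Finset.prod_congr rfl fun e _ => ?_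
  rw [abs_pow]
  split_ifs with h
  · rw [abs_of_neg (sub_neg.2 h), ← mul_pow, neg_one_mul, neg_neg]
  · rw [abs_of_nonneg (sub_nonneg.2 (not_lt.1 h)), pow_zero, one_mul]

theorem qfun_sq (hL : L.HasFiniteSupport) (u : ℝ) : qfun L u ^ 2 = PfunR L u := by
  rw [qfun, mul_pow, pow_right_comm, Complex.I_sq, ← Complex.ofReal_pow,
    Real.sq_sqrt (abs_nonneg _)]
  conv_rhs => rw [PfunR_eq_neg_one_pow_mul_abs hL u]
  push_cast
  ring

theorem ofReal_PfunR (hL : L.HasFiniteSupport) (u : ℝ) :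
    (PfunR L u : ℂ) = ∏ᶠ e, ((u - e : ℝ) : ℂ) ^ L e := by
  simpa [PfunR] using Complex.ofRealHom.map_finprod (hL.hasFiniteMulSupport_fun_pow (u - ·))

end QFun

section Ord

variable {α β : ℝ} {ℒ₁ ℒ₂ : ℝ → ℕ} {l : List (Fin 2)}

theorem support_ordL_subset_latF (hconf : Config α β ℒ₁ ℒ₂) :
    support (ordL α β ℒ₁ l) ⊆ latF α β := by
  intro lam hlam
  obtain ⟨j, -, hj⟩ := Finset.exists_ne_zero_of_sum_ne_zero hlam
  split_ifs at hj
  · obtain ⟨x, y, hxy⟩ := hconf.supp1 _ hj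
    rw [sigmaL, sum_map_stepOf] at hxy
    exact ⟨x - (l.take j).count 0, y - (l.take j).count 1, by push_cast; linarith⟩
  · exact (hj rfl).elim

theorem hasFiniteSupport_ordL (h₁ : ℒ₁.HasFiniteSupport) :
    (ordL α β ℒ₁ l).HasFiniteSupport := by
  refine HasFiniteSupport.sum (fun j => ?_) _
  split_ifs
  · exact h₁.fun_comp_of_injective ((add_left_injective _).comp (add_left_injective _))
  · exact hasFiniteSupport_zero

end Ord

theorem sum_shifted_edges_eq_ordL_add_ordL₂ (α β : ℝ) (ℒ₁ ℒ₂ : ℝ → ℕ) (l : List (Fin 2)) :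
    ∑ j ∈ Finset.range l.length, (fun x => (if l.getD j 0 = 0 then ℒ₁ else ℒ₂)
      (x + (sigmaL α β l j + (if l.getD j 0 = 0 then α else β) / 2))) =
      ordL α β ℒ₁ l + ordL₂ α β ℒ₂ l := by
  ext x
  simp only [Finset.sum_apply, Pi.add_apply, ordL, ordL₂, ← Finset.sum_add_distrib]
  refine Finset.sum_congr rfl fun j _ => ?_
  split_ifs <;> simp [add_assoc]

theorem stmt17_general (m n : ℕ) (α β : ℝ)
    (hαβ : (α, β) ≠ ((0 : ℝ), (0 : ℝ))) (hlin : (m : ℝ) * α + (n : ℝ) * β = 0)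
    (ℒ₁ ℒ₂ : ℝ → ℕ) (hconf : Config α β ℒ₁ ℒ₂)
    (l : List (Fin 2)) (hl0 : l.count 0 = m) (hl1 : l.count 1 = n) :
    {lam ∈ latF α β | ordL α β ℒ₁ l lam ≠ 0}.Finite ∧
    ∀ μ ∈ latF α β,
      (∏ j ∈ Finset.range l.length,
        qfun (if l.getD j 0 = 0 then ℒ₁ else ℒ₂)
          (μ + sigmaL α β l j + (if l.getD j 0 = 0 then α else β) / 2)) =
      ∏ᶠ lam ∈ latF α β, ((μ - lam : ℝ) : ℂ) ^ ordL α β ℒ₁ l lam := by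
  have hclosed : (l.map (stepOf α β)).sum = 0 := by rw [sum_map_stepOf, hl0, hl1, hlin]
  have hfin : (ordL α β ℒ₁ l).HasFiniteSupport := hasFiniteSupport_ordL hconf.fin1
  have hstep (j : ℕ) : (if l.getD j 0 = 0 then ℒ₁ else ℒ₂).HasFiniteSupport := by
    split_ifs
    exacts [hconf.fin1, hconf.fin2]
  refine ⟨hfin.subset fun _ h => h.2, fun μ _ => ?_⟩
  calc _ = qfun (ordL α β ℒ₁ l + ordL₂ α β ℒ₂ l) μ := by
        simp_rw [add_assoc μ, qfun_add_right]
        rw [prod_qfun _ fun j => (hstep j).fun_comp_of_injective (add_left_injective _),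
          sum_shifted_edges_eq_ordL_add_ordL₂]
    _ = PfunR (ordL α β ℒ₁ l) μ := by
        rw [← ordL_eq_ordL₂ hconf hαβ hclosed, qfun_add hfin hfin, ← sq, qfun_sq hfin]
    _ = _ := by
        rw [ofReal_PfunR hfin, ← finprod_mem_univ]
        refine finprod_mem_inter_mulSupport_eq' _ _ _ fun lam hlam => iff_of_true trivial ?_
        exact support_ordL_subset_latF (l := l) hconf fun h => hlam (by simp [h])

/-- For every `𝐢 ∈ Seq₂(m,n)` and `μ ∈ F`:
`∏_{j=1}^{ℓ} q_{i_j}(μ+σ_j+α_{i_j}/2) = ∏_{λ∈F} (μ−λ)^{ord(𝐢,λ)}`, the right-hand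
product having only finitely many factors `≠ 1` since `ord(𝐢,·)` is nonzero at only
finitely many `λ ∈ F`. -/
theorem stmt17 (m n : ℕ) (hmn : Nat.Coprime m n) (α β : ℝ)
    (hαβ : (α, β) ≠ ((0 : ℝ), (0 : ℝ))) (hlin : (m : ℝ) * α + (n : ℝ) * β = 0)
    (ℒ₁ ℒ₂ : ℝ → ℕ) (hconf : Config α β ℒ₁ ℒ₂)
    (l : List (Fin 2)) (hl0 : l.count 0 = m) (hl1 : l.count 1 = n) :
    {lam ∈ latF α β | ordL α β ℒ₁ l lam ≠ 0}.Finite ∧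
    ∀ μ ∈ latF α β,
      (∏ j ∈ Finset.range l.length,
        qfun (if l.getD j 0 = 0 then ℒ₁ else ℒ₂)
          (μ + sigmaL α β l j + (if l.getD j 0 = 0 then α else β) / 2)) =
      ∏ᶠ lam ∈ latF α β, ((μ - lam : ℝ) : ℂ) ^ ordL α β ℒ₁ l lam :=
  stmt17_general m n α β hαβ hlin ℒ₁ ℒ₂ hconf l hl0 hl1
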